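/- Let H = (V, E) be a hypergraph and let k be a positive integer. Then H contains k pairwise disjoint hypertrees if and only if |δ(𝒫)| ≥ k(|𝒫| − 1) holds for every partition 𝒫 of V into nonempty parts. -/
import Mathlib
set_option linter.unusedSectionVars false

open Finset

variable {V α : Type*}

/-- `F[X]`: the subfamily of hyperedges of `F` contained in `X`. -/
def restrict [DecidableEq V] (edge : α → Finset V) (F : Finset α) (X : Finset V) : Finset α :=
  F.filter fun e => edge e ⊆ X


/-- `F` is a hyperforest of the hypergraph `(V, E)` (with hyperedges given by `edge`). -/
def IsHyperforest [DecidableEq V] (edge : α → Finset V) (E F : Finset α) : Prop :=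
  F ⊆ E ∧ ∀ X : Finset V, X.Nonempty → (restrict edge F X).card ≤ X.card - 1

/-- `F` is a hypertree: a hyperforest with `|V| - 1` hyperedges. -/
def IsHypertree [Fintype V] [DecidableEq V] (edge : α → Finset V) (E F : Finset α) : Prop :=
  IsHyperforest edge E F ∧ F.card = Fintype.card V - 1

/-- `Ps` is a family of pairwise disjoint nonempty sets whose union is `S`. -/
def IsPartitionOf [DecidableEq V] (Ps : Finset (Finset V)) (S : Finset V) : Prop :=
  (∀ P ∈ Ps, P.Nonempty) ∧ (∀ P ∈ Ps, ∀ Q ∈ Ps, P ≠ Q → Disjoint P Q) ∧ Ps.sup id = S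

/-- `Ps` is a partition of the vertex set `V` into nonempty parts. -/
def IsPartition [Fintype V] [DecidableEq V] (Ps : Finset (Finset V)) : Prop :=
  IsPartitionOf Ps Finset.univ

/-- `δ_F(Ps)`: hyperedges of `F` contained in the union of the members of `Ps`
and intersecting at least two members of `Ps`. -/
def delta [DecidableEq V] (edge : α → Finset V) (F : Finset α) (Ps : Finset (Finset V)) :
    Finset α :=
  F.filter fun e => edge e ⊆ Ps.sup id ∧
    2 ≤ (Ps.filter fun P => (edge e ∩ P).Nonempty).card

section Basic
variable [DecidableEq V] [DecidableEq α] {edge : α → Finset V}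

lemma mem_restrict {F : Finset α} {X : Finset V} {e : α} :
    e ∈ restrict edge F X ↔ e ∈ F ∧ edge e ⊆ X := Finset.mem_filter

lemma restrict_subset (F : Finset α) (X : Finset V) : restrict edge F X ⊆ F :=
  Finset.filter_subset _ _

lemma restrict_mono {F G : Finset α} (X : Finset V) (h : F ⊆ G) :
    restrict edge F X ⊆ restrict edge G X := Finset.filter_subset_filter _ h

lemma restrict_mono_right (F : Finset α) {X Y : Finset V} (h : X ⊆ Y) :
    restrict edge F X ⊆ restrict edge F Y := by
  intro e he
  rw [mem_restrict] at he ⊢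
  exact ⟨he.1, he.2.trans h⟩

lemma restrict_submod (F : Finset α) (X Y : Finset V) :
    (restrict edge F X).card + (restrict edge F Y).card ≤
      (restrict edge F (X ∪ Y)).card + (restrict edge F (X ∩ Y)).card := by
  have h1 : restrict edge F X ∪ restrict edge F Y ⊆ restrict edge F (X ∪ Y) := by
    intro e he
    rcases Finset.mem_union.1 he with h | h <;> rw [mem_restrict] at h ⊢
    · exact ⟨h.1, h.2.trans Finset.subset_union_left⟩
    · exact ⟨h.1, h.2.trans Finset.subset_union_right⟩
  have h2 : restrict edge F X ∩ restrict edge F Y = restrict edge F (X ∩ Y) := by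
    ext e
    simp only [Finset.mem_inter, mem_restrict, Finset.subset_inter_iff]
    tauto
  calc (restrict edge F X).card + (restrict edge F Y).card
      = (restrict edge F X ∪ restrict edge F Y).card
        + (restrict edge F X ∩ restrict edge F Y).card :=
        (Finset.card_union_add_card_inter _ _).symm
    _ ≤ (restrict edge F (X ∪ Y)).card + (restrict edge F (X ∩ Y)).card := by
        rw [h2]; exact Nat.add_le_add_right (Finset.card_le_card h1) _

/-- relative hyperforest (without `⊆ E` condition), in strict-`<` form. -/
def HF (edge : α → Finset V) (F : Finset α) : Prop :=
  ∀ X : Finset V, X.Nonempty → (restrict edge F X).card < X.card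

/-- `X` is tight for `F`. -/
def Tight (edge : α → Finset V) (F : Finset α) (X : Finset V) : Prop :=
  X.Nonempty ∧ (restrict edge F X).card + 1 = X.card

lemma Tight.union {F : Finset α} (hF : HF edge F) {X Y : Finset V}
    (hX : Tight edge F X) (hY : Tight edge F Y) (hXY : (X ∩ Y).Nonempty) :
    Tight edge F (X ∪ Y) := by
  have hsub := restrict_submod (edge := edge) F X Y
  have h1 := hF (X ∪ Y) (hX.1.mono Finset.subset_union_left)
  have h2 := hF (X ∩ Y) hXY
  have hc : (X ∪ Y).card + (X ∩ Y).card = X.card + Y.card :=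
    Finset.card_union_add_card_inter _ _
  have e1 := hX.2
  have e2 := hY.2
  constructor
  · exact hX.1.mono Finset.subset_union_left
  · omega

lemma Tight.inter {F : Finset α} (hF : HF edge F) {X Y : Finset V}
    (hX : Tight edge F X) (hY : Tight edge F Y) (hXY : (X ∩ Y).Nonempty) :
    Tight edge F (X ∩ Y) := by
  have hsub := restrict_submod (edge := edge) F X Y
  have h1 := hF (X ∪ Y) (hX.1.mono Finset.subset_union_left)
  have h2 := hF (X ∩ Y) hXY
  have hc : (X ∪ Y).card + (X ∩ Y).card = X.card + Y.card :=
    Finset.card_union_add_card_inter _ _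
  have e1 := hX.2
  have e2 := hY.2
  exact ⟨hXY, by omega⟩

lemma tight_singleton (hE2 : ∀ e ∈ F, 2 ≤ (edge e).card) (v : V) :
    Tight edge F {v} := by
  constructor
  · exact Finset.singleton_nonempty v
  · have : restrict edge F {v} = ∅ := by
      rw [Finset.eq_empty_iff_forall_notMem]
      intro e he
      rw [mem_restrict] at he
      have h1 := Finset.card_le_card he.2
      have h2 := hE2 e he.1
      rw [Finset.card_singleton] at h1
      omega
    rw [this]; simp

end Basic

section Exchange
variable [DecidableEq V] [DecidableEq α] {edge : α → Finset V} {F : Finset α} {e f : α}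

lemma restrict_insert (e : α) (F : Finset α) (X : Finset V) :
    restrict edge (insert e F) X =
      if edge e ⊆ X then insert e (restrict edge F X) else restrict edge F X := by
  simp [_root_.restrict, Finset.filter_insert]

lemma restrict_erase (f : α) (F : Finset α) (X : Finset V) :
    restrict edge (F.erase f) X = (restrict edge F X).erase f := by
  ext a
  simp only [mem_restrict, Finset.mem_erase]
  tauto

lemma e_not_mem_restrict (heF : e ∉ F) (X : Finset V) : e ∉ restrict edge F X :=
  fun h => heF (restrict_subset F X h)

lemma exists_tight (hF : HF edge F) (heF : e ∉ F) (h : ¬ HF edge (insert e F)) :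
    ∃ X, Tight edge F X ∧ edge e ⊆ X := by
  unfold HF at h
  push_neg at h
  obtain ⟨X, hXne, hX⟩ := h
  rw [restrict_insert] at hX
  by_cases he : edge e ⊆ X
  · rw [if_pos he] at hX
    rw [Finset.card_insert_of_notMem (e_not_mem_restrict heF X)] at hX
    have := hF X hXne
    exact ⟨X, ⟨hXne, by omega⟩, he⟩
  · rw [if_neg he] at hX
    exact absurd (hF X hXne) (by omega)

lemma tight_subset_ground {S X : Finset V} (hF : HF edge F) (hFS : ∀ f ∈ F, edge f ⊆ S)
    (hX : Tight edge F X) (he : edge e ⊆ X) (heS : edge e ⊆ S) (hene : (edge e).Nonempty) :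
    X ⊆ S := by
  have hr : restrict edge F X = restrict edge F (X ∩ S) := by
    apply Finset.Subset.antisymm
    · intro a ha
      rw [mem_restrict] at ha ⊢
      exact ⟨ha.1, Finset.subset_inter ha.2 (hFS a ha.1)⟩
    · exact restrict_mono_right F Finset.inter_subset_left
  have hXS : (X ∩ S).Nonempty := by
    obtain ⟨v, hv⟩ := hene
    exact ⟨v, Finset.mem_inter.2 ⟨he hv, heS hv⟩⟩
  have h1 := hF (X ∩ S) hXS
  rw [← hr] at h1
  have h2 := hX.2
  have h3 : X.card ≤ (X ∩ S).card := by omega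
  have h4 : X ∩ S = X :=
    Finset.eq_of_subset_of_card_le Finset.inter_subset_left h3
  rw [← h4]
  exact Finset.inter_subset_right

lemma exists_min_tight (hF : HF edge F) (hene : (edge e).Nonempty)
    (h : ∃ X, Tight edge F X ∧ edge e ⊆ X) :
    ∃ M, (Tight edge F M ∧ edge e ⊆ M) ∧ ∀ X, Tight edge F X → edge e ⊆ X → M ⊆ X := by
  have hP : ∃ n, ∃ X, (Tight edge F X ∧ edge e ⊆ X) ∧ X.card = n := by
    obtain ⟨X, hX⟩ := h
    exact ⟨X.card, X, hX, rfl⟩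
  classical
  obtain ⟨M, hM, hMcard⟩ := Nat.find_spec hP
  refine ⟨M, hM, fun X hX heX => ?_⟩
  have hint : Tight edge F (M ∩ X) := by
    apply Tight.inter hF hM.1 hX
    obtain ⟨v, hv⟩ := hene
    exact ⟨v, Finset.mem_inter.2 ⟨hM.2 hv, heX hv⟩⟩
  have hsub : edge e ⊆ M ∩ X := Finset.subset_inter hM.2 heX
  have hge : Nat.find hP ≤ (M ∩ X).card :=
    Nat.find_min' hP ⟨M ∩ X, ⟨hint, hsub⟩, rfl⟩
  have hMandX : M ∩ X = M :=
    Finset.eq_of_subset_of_card_le Finset.inter_subset_left (by omega)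
  rw [← hMandX]
  exact Finset.inter_subset_right

lemma exchange_out (hF : HF edge F) (heF : e ∉ F) {M : Finset V}
    (hM : Tight edge F M) (heM : edge e ⊆ M)
    (hmin : ∀ X, Tight edge F X → edge e ⊆ X → M ⊆ X)
    (hf : f ∈ restrict edge F M) : HF edge (insert e (F.erase f)) := by
  intro X hXne
  by_contra hcon
  push_neg at hcon
  rw [restrict_insert, restrict_erase] at hcon
  by_cases he : edge e ⊆ X
  · rw [if_pos he] at hcon
    have hfF : f ∈ F := (restrict_subset F M) hf
    have hcard : (insert e ((restrict edge F X).erase f)).card ≤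
        ((restrict edge F X).erase f).card + 1 := Finset.card_insert_le _ _
    have h1 := hF X hXne
    have htight : Tight edge F X := by
      constructor
      · exact hXne
      · have := Finset.card_erase_le (a := f) (s := restrict edge F X)
        omega
    have hMX := hmin X htight he
    have hfX : f ∈ restrict edge F X := by
      rw [mem_restrict] at hf ⊢
      exact ⟨hf.1, hf.2.trans hMX⟩
    rw [Finset.card_erase_of_mem hfX] at hcard
    have h2 := htight.2
    have h5 : 1 ≤ (restrict edge F X).card := Finset.card_pos.mpr ⟨f, hfX⟩
    omega
  · rw [if_neg he] at hcon
    have : (restrict edge F X).erase f ⊆ restrict edge F X := Finset.erase_subset _ _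
    have := Finset.card_le_card this
    have := hF X hXne
    omega

lemma exchange_in (hF : HF edge F) (heF : e ∉ F) (hfF : f ∈ F)
    (hHF' : HF edge (insert e (F.erase f))) {X : Finset V}
    (hX : Tight edge F X) (heX : edge e ⊆ X) : f ∈ restrict edge F X := by
  by_contra hcon
  have h := hHF' X hX.1
  rw [restrict_insert, restrict_erase, if_pos heX] at h
  rw [Finset.erase_eq_of_notMem hcon] at h
  rw [Finset.card_insert_of_notMem (e_not_mem_restrict heF X)] at h
  have := hX.2
  omega

end Exchange

section Forward
variable [DecidableEq V] [DecidableEq α] {edge : α → Finset V}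

lemma delta_mono {F G : Finset α} (Ps : Finset (Finset V)) (h : F ⊆ G) :
    delta edge F Ps ⊆ delta edge G Ps := Finset.filter_subset_filter _ h

lemma delta_subset (F : Finset α) (Ps : Finset (Finset V)) :
    delta edge F Ps ⊆ F := Finset.filter_subset _ _

/-- Every edge of `F` (with edges inside `sup Ps`, nonempty) is in `δ_F(Ps)` or inside a part. -/
lemma edge_delta_or_part {F : Finset α} {Ps : Finset (Finset V)}
    (hne : ∀ e ∈ F, (edge e).Nonempty) (hsub : ∀ e ∈ F, edge e ⊆ Ps.sup id) :
    F ⊆ delta edge F Ps ∪ Ps.biUnion (fun P => restrict edge F P) := by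
  intro e he
  rw [Finset.mem_union]
  set parts := Ps.filter fun P => (edge e ∩ P).Nonempty with hparts
  have hpne : parts.Nonempty := by
    obtain ⟨v, hv⟩ := hne e he
    have hv2 : v ∈ Ps.sup id := hsub e he hv
    rw [Finset.mem_sup] at hv2
    obtain ⟨P, hP, hvP⟩ := hv2
    exact ⟨P, Finset.mem_filter.2 ⟨hP, ⟨v, Finset.mem_inter.2 ⟨hv, hvP⟩⟩⟩⟩
  by_cases h2 : 2 ≤ parts.card
  · exact Or.inl (Finset.mem_filter.2 ⟨he, hsub e he, h2⟩)
  · right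
    have h1 : parts.card = 1 := by
      have := Finset.card_pos.2 hpne
      omega
    obtain ⟨P, hP⟩ := Finset.card_eq_one.1 h1
    have hPPs : P ∈ Ps := by
      have : P ∈ parts := hP ▸ Finset.mem_singleton_self P
      exact (Finset.mem_filter.1 this).1
    rw [Finset.mem_biUnion]
    refine ⟨P, hPPs, mem_restrict.2 ⟨he, ?_⟩⟩
    intro w hw
    have hw2 : w ∈ Ps.sup id := hsub e he hw
    rw [Finset.mem_sup] at hw2
    obtain ⟨Q, hQ, hwQ⟩ := hw2
    have : Q ∈ parts := Finset.mem_filter.2 ⟨hQ, ⟨w, Finset.mem_inter.2 ⟨hw, hwQ⟩⟩⟩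
    rw [hP, Finset.mem_singleton] at this
    exact this ▸ hwQ

lemma sum_parts_card {Ps : Finset (Finset V)} {S : Finset V} (hPs : IsPartitionOf Ps S) :
    ∑ P ∈ Ps, P.card = S.card := by
  obtain ⟨hne, hdisj, hsup⟩ := hPs
  rw [← hsup, Finset.sup_eq_biUnion]
  exact (Finset.card_biUnion (fun P hP Q hQ hPQ => hdisj P hP Q hQ hPQ)).symm

/-- A hyperforest `F` on ground `S` satisfies `|F| ≤ |δ_F(Ps)| + |S| - |Ps|`. -/
lemma forest_count {F : Finset α} {Ps : Finset (Finset V)} {S : Finset V}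
    (hPs : IsPartitionOf Ps S) (hF : HF edge F)
    (hne : ∀ e ∈ F, (edge e).Nonempty) (hsub : ∀ e ∈ F, edge e ⊆ S) :
    F.card + Ps.card ≤ (delta edge F Ps).card + S.card := by
  have hsup : Ps.sup id = S := hPs.2.2
  have hmain := Finset.card_le_card
    (edge_delta_or_part (edge := edge) hne (fun e he => hsup ▸ hsub e he))
  have h2 : (delta edge F Ps ∪ Ps.biUnion fun P => restrict edge F P).card ≤
      (delta edge F Ps).card + ∑ P ∈ Ps, (restrict edge F P).card :=
    le_trans (Finset.card_union_le _ _) (by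
      exact Nat.add_le_add_left (Finset.card_biUnion_le) _)
  have h3 : ∀ P ∈ Ps, (restrict edge F P).card + 1 ≤ P.card := fun P hP => hF P (hPs.1 P hP)
  have h4 : (∑ P ∈ Ps, (restrict edge F P).card) + Ps.card ≤ ∑ P ∈ Ps, P.card := by
    calc (∑ P ∈ Ps, (restrict edge F P).card) + Ps.card
        = ∑ P ∈ Ps, ((restrict edge F P).card + 1) := by
          rw [Finset.sum_add_distrib, Finset.sum_const, smul_eq_mul, mul_one]
      _ ≤ ∑ P ∈ Ps, P.card := Finset.sum_le_sum h3
  have h5 := sum_parts_card hPs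
  omega

end Forward

section Machine
variable [DecidableEq V] [DecidableEq α]

/-- A valid tuple of `k` pairwise disjoint hyperforests inside `E'`. -/
def Valid (edge : α → Finset V) (E' : Finset α) (k : ℕ) (T : Fin k → Finset α) : Prop :=
  (∀ i, T i ⊆ E') ∧ (∀ i, HF edge (T i)) ∧ ∀ i j, i ≠ j → Disjoint (T i) (T j)

/-- One exchange step between valid tuples. -/
def StepR (edge : α → Finset V) (E' : Finset α) (k : ℕ) (T T' : Fin k → Finset α) : Prop :=
  Valid edge E' k T ∧ Valid edge E' k T' ∧
  ∃ i e f, e ∈ E' ∧ (∀ j, e ∉ T j) ∧ f ∈ T i ∧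
    T' = Function.update T i (insert e ((T i).erase f))

def Mobile (edge : α → Finset V) (E' : Finset α) (k : ℕ) (F0 : Fin k → Finset α) (e : α) :
    Prop :=
  e ∈ E' ∧ ∃ T, Relation.ReflTransGen (StepR edge E' k) F0 T ∧ ∀ j, e ∉ T j

open Classical in
/-- `U`: the mobile-component of `x` inside `S`. -/
noncomputable def Uset (edge : α → Finset V) (E' : Finset α) (S : Finset V) (k : ℕ)
    (F0 : Fin k → Finset α) (x : V) : Finset V :=
  S.filter fun v => Relation.ReflTransGen
    (fun a b => ∃ f, Mobile edge E' k F0 f ∧ a ∈ edge f ∧ b ∈ edge f) x v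

variable {edge : α → Finset V} {E' : Finset α} {S : Finset V} {k : ℕ}
  {F0 T T' : Fin k → Finset α} {x : V}

lemma StepR.symm (h : StepR edge E' k T T') : StepR edge E' k T' T := by
  obtain ⟨hT, hT', i, e, f, heE, heT, hfT, hupd⟩ := h
  refine ⟨hT', hT, i, f, e, hT.1 i hfT, ?_, ?_, ?_⟩
  · intro j
    by_cases hj : j = i
    · rw [hupd, hj, Function.update_self]
      intro hmem
      rcases Finset.mem_insert.1 hmem with h | h
      · exact heT i (h ▸ hfT)
      · exact (Finset.mem_erase.1 h).1 rfl
    · rw [hupd, Function.update_of_ne hj]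
      intro hmem
      exact absurd hfT (Finset.disjoint_left.1 (hT.2.2 j i hj) hmem)
  · rw [hupd, Function.update_self]
    exact Finset.mem_insert_self e _
  · rw [hupd]
    funext j
    by_cases hj : j = i
    · rw [hj]
      simp only [Function.update_self]
      rw [Finset.erase_insert (fun h => (heT i) (Finset.mem_erase.1 h).2),
        Finset.insert_erase hfT]
    · rw [Function.update_of_ne hj, Function.update_of_ne hj]

lemma reach_valid (hF0 : Valid edge E' k F0)
    (h : Relation.ReflTransGen (StepR edge E' k) F0 T) : Valid edge E' k T := by
  induction h with
  | refl => exact hF0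
  | tail _ hstep ih => exact hstep.2.1

lemma reach_card (h : Relation.ReflTransGen (StepR edge E' k) F0 T) :
    ∀ i, (T i).card = (F0 i).card := by
  induction h with
  | refl => exact fun _ => rfl
  | @tail b c hprev hstep ih =>
    intro i
    obtain ⟨hT1, hT2, j, e, f, heE, heT, hfT, hupd⟩ := hstep
    rw [hupd]
    rcases eq_or_ne i j with rfl | hij
    · rw [Function.update_self,
        Finset.card_insert_of_notMem (fun h => (heT i) (Finset.mem_erase.1 h).2),
        Finset.card_erase_of_mem hfT]
      have h1 : 1 ≤ (b i).card := Finset.card_pos.2 ⟨f, hfT⟩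
      have h2 := ih i
      omega
    · rw [Function.update_of_ne hij]
      exact ih i

end Machine

section Machine2
variable [DecidableEq V] [DecidableEq α]

def sumT (k : ℕ) (T : Fin k → Finset α) : ℕ := ∑ i, (T i).card

variable {edge : α → Finset V} {E' : Finset α} {S : Finset V} {k : ℕ}
  {F0 T T' : Fin k → Finset α} {x : V} {e : α}

lemma valid_empty : Valid edge E' k (fun _ => (∅ : Finset α)) := by
  refine ⟨fun i => Finset.empty_subset _, fun i X hX => ?_, fun i j h => Finset.disjoint_empty_left _⟩
  have : restrict edge (∅ : Finset α) X = ∅ := rfl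
  rw [this]
  simpa using Finset.card_pos.2 hX

lemma exists_max_tuple (edge : α → Finset V) (E' : Finset α) (k : ℕ) :
    ∃ F0, Valid edge E' k F0 ∧ ∀ T, Valid edge E' k T → sumT k T ≤ sumT k F0 := by
  classical
  set 𝒮 := (Fintype.piFinset fun _ : Fin k => E'.powerset).filter (Valid edge E' k) with h𝒮
  have hne : 𝒮.Nonempty := by
    refine ⟨fun _ => ∅, Finset.mem_filter.2 ⟨?_, valid_empty⟩⟩
    rw [Fintype.mem_piFinset]
    intro i
    exact Finset.mem_powerset.2 (Finset.empty_subset _)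
  obtain ⟨F0, hF0mem, hF0max⟩ := Finset.exists_max_image 𝒮 (sumT k) hne
  refine ⟨F0, (Finset.mem_filter.1 hF0mem).2, fun T hT => hF0max T ?_⟩
  refine Finset.mem_filter.2 ⟨?_, hT⟩
  rw [Fintype.mem_piFinset]
  exact fun i => Finset.mem_powerset.2 (hT.1 i)

lemma sum_reach (h : Relation.ReflTransGen (StepR edge E' k) F0 T) :
    sumT k T = sumT k F0 :=
  Finset.sum_congr rfl fun i _ => reach_card h i

lemma not_augment (hF0 : Valid edge E' k F0)
    (hmax : ∀ T, Valid edge E' k T → sumT k T ≤ sumT k F0)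
    (hreach : Relation.ReflTransGen (StepR edge E' k) F0 T)
    (heE : e ∈ E') (heT : ∀ j, e ∉ T j) (i : Fin k) :
    ¬ HF edge (insert e (T i)) := by
  intro hHF
  have hT := reach_valid hF0 hreach
  set T' := Function.update T i (insert e (T i)) with hT'def
  have hval : Valid edge E' k T' := by
    refine ⟨fun j => ?_, fun j => ?_, fun a b hab => ?_⟩
    · by_cases hj : j = i
      · rw [hT'def, hj, Function.update_self]
        exact Finset.insert_subset heE (hT.1 i)
      · rw [hT'def, Function.update_of_ne hj]; exact hT.1 j
    · by_cases hj : j = i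
      · rw [hT'def, hj, Function.update_self]; exact hHF
      · rw [hT'def, Function.update_of_ne hj]; exact hT.2.1 j
    · by_cases ha : a = i <;> by_cases hb : b = i
      · exact absurd (ha.trans hb.symm) hab
      · rw [hT'def, ha, Function.update_self, Function.update_of_ne hb]
        rw [Finset.disjoint_insert_left]
        exact ⟨heT b, ha ▸ hT.2.2 a b hab⟩
      · rw [hT'def, hb, Function.update_self, Function.update_of_ne ha]
        rw [Finset.disjoint_insert_right]
        exact ⟨heT a, hb ▸ hT.2.2 a b hab⟩
      · rw [hT'def, Function.update_of_ne ha, Function.update_of_ne hb]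
        exact hT.2.2 a b hab
  have hsum : sumT k T' = sumT k T + 1 := by
    unfold sumT
    have h1 : ∑ j, (T' j).card =
        ∑ j, (Function.update (fun j => (T j).card) i (insert e (T i)).card) j := by
      apply Finset.sum_congr rfl
      intro j _
      by_cases hj : j = i
      · rw [hj, hT'def]
        simp only [Function.update_self]
      · rw [hT'def, Function.update_of_ne hj, Function.update_of_ne hj]
    rw [h1, Finset.sum_update_of_mem (Finset.mem_univ i),
      Finset.card_insert_of_notMem (heT i),
      ← Finset.add_sum_erase Finset.univ (fun j => (T j).card) (Finset.mem_univ i),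
      Finset.erase_eq]
    omega
  have h1 := hmax T' hval
  have h2 := sum_reach hreach
  omega

lemma mem_Uset {v : V} :
    v ∈ Uset edge E' S k F0 x ↔ v ∈ S ∧ Relation.ReflTransGen
      (fun a b => ∃ f, Mobile edge E' k F0 f ∧ a ∈ edge f ∧ b ∈ edge f) x v := by
  classical
  simp [Uset]

lemma Uset_closed (hE' : ∀ e ∈ E', edge e ⊆ S) {f : α} {a : V}
    (hf : Mobile edge E' k F0 f) (ha : a ∈ edge f) (haU : a ∈ Uset edge E' S k F0 x) :
    edge f ⊆ Uset edge E' S k F0 x := by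
  intro b hb
  rw [mem_Uset]
  refine ⟨hE' f hf.1 hb, ?_⟩
  exact (mem_Uset.1 haU).2.tail ⟨f, hf, ha, hb⟩

lemma zero_lemma (hF0 : Valid edge E' k F0)
    (hmax : ∀ T, Valid edge E' k T → sumT k T ≤ sumT k F0)
    (hE' : ∀ e ∈ E', edge e ⊆ S ∧ 2 ≤ (edge e).card)
    (hreach : Relation.ReflTransGen (StepR edge E' k) F0 T)
    (heE : e ∈ E') (heT : ∀ j, e ∉ T j) (heU : edge e ⊆ Uset edge E' S k F0 x) (i : Fin k) :
    ∃ M, Tight edge (T i) M ∧ edge e ⊆ M ∧ M ⊆ Uset edge E' S k F0 x ∧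
      (∀ X, Tight edge (T i) X → edge e ⊆ X → M ⊆ X) := by
  set U := Uset edge E' S k F0 x with hU
  have hT := reach_valid hF0 hreach
  have hHFi : HF edge (T i) := hT.2.1 i
  have heTi : e ∉ T i := heT i
  have hene : (edge e).Nonempty := Finset.card_pos.1 (by have := (hE' e heE).2; omega)
  obtain ⟨X, hX, heX⟩ := exists_tight hHFi heTi (not_augment hF0 hmax hreach heE heT i)
  obtain ⟨M, ⟨hMt, heM⟩, hmin⟩ := exists_min_tight hHFi hene ⟨X, hX, heX⟩
  have hmob : ∀ f ∈ restrict edge (T i) M, Mobile edge E' k F0 f := by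
    intro f hf
    have hfTi : f ∈ T i := restrict_subset _ _ hf
    set T' := Function.update T i (insert e ((T i).erase f)) with hT'def
    have hval : Valid edge E' k T' := by
      refine ⟨fun j => ?_, fun j => ?_, fun a b hab => ?_⟩
      · by_cases hj : j = i
        · rw [hT'def, hj, Function.update_self]
          exact Finset.insert_subset heE ((Finset.erase_subset _ _).trans (hT.1 i))
        · rw [hT'def, Function.update_of_ne hj]; exact hT.1 j
      · by_cases hj : j = i
        · rw [hT'def, hj, Function.update_self]
          exact exchange_out hHFi heTi hMt heM hmin hf
        · rw [hT'def, Function.update_of_ne hj]; exact hT.2.1 j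
      · have base := hT.2.2
        by_cases ha : a = i <;> by_cases hb : b = i
        · exact absurd (ha.trans hb.symm) hab
        · rw [hT'def, ha, Function.update_self, Function.update_of_ne hb,
            Finset.disjoint_insert_left]
          exact ⟨heT b, Finset.disjoint_of_subset_left (Finset.erase_subset _ _)
            (ha ▸ base a b hab)⟩
        · rw [hT'def, hb, Function.update_self, Function.update_of_ne ha,
            Finset.disjoint_insert_right]
          exact ⟨heT a, Finset.disjoint_of_subset_right (Finset.erase_subset _ _)
            (hb ▸ base a b hab)⟩
        · rw [hT'def, Function.update_of_ne ha, Function.update_of_ne hb]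
          exact base a b hab
    have hstep : StepR edge E' k T T' := ⟨hT, hval, i, e, f, heE, heT, hfTi, rfl⟩
    refine ⟨hT.1 i hfTi, T', hreach.tail hstep, fun j => ?_⟩
    by_cases hj : j = i
    · rw [hT'def, hj, Function.update_self]
      intro hmem
      rcases Finset.mem_insert.1 hmem with h | h
      · exact heTi (h ▸ hfTi)
      · exact (Finset.mem_erase.1 h).1 rfl
    · rw [hT'def, Function.update_of_ne hj]
      intro hmem
      exact absurd hfTi (Finset.disjoint_left.1 (hT.2.2 j i hj) hmem)
  have hMU : M ⊆ U := by
    by_contra hMU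
    have hBne : (M \ (M ∩ U)).Nonempty := by
      rw [Finset.sdiff_nonempty]
      intro hsub
      exact hMU (fun v hv => Finset.mem_inter.1 (hsub hv) |>.2)
    set A := M ∩ U with hA
    set B := M \ A with hB
    have hAne : A.Nonempty := by
      obtain ⟨v, hv⟩ := hene
      exact ⟨v, Finset.mem_inter.2 ⟨heM hv, heU hv⟩⟩
    have hsplit : restrict edge (T i) M ⊆ restrict edge (T i) A ∪ restrict edge (T i) B := by
      intro f hf
      have hfM := (mem_restrict.1 hf).2
      have hfT := (mem_restrict.1 hf).1
      rw [Finset.mem_union]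
      by_cases hint : (edge f ∩ A).Nonempty
      · obtain ⟨a, ha⟩ := hint
        have haU : a ∈ U := (Finset.mem_inter.1 (Finset.mem_inter.1 ha).2).2
        have hfU : edge f ⊆ U := Uset_closed (fun g hg => (hE' g hg).1) (hmob f hf)
          (Finset.mem_inter.1 ha).1 haU
        exact Or.inl (mem_restrict.2 ⟨hfT, Finset.subset_inter hfM hfU⟩)
      · refine Or.inr (mem_restrict.2 ⟨hfT, fun w hw => ?_⟩)
        rw [hB, Finset.mem_sdiff]
        refine ⟨hfM hw, fun hwA => hint ⟨w, Finset.mem_inter.2 ⟨hw, hwA⟩⟩⟩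
    have hdisj : Disjoint (restrict edge (T i) A) (restrict edge (T i) B) := by
      rw [Finset.disjoint_left]
      intro f hfA hfB
      have h1 := (mem_restrict.1 hfA).2
      have h2 := (mem_restrict.1 hfB).2
      have hfE : f ∈ E' := hT.1 i ((mem_restrict.1 hfA).1)
      obtain ⟨v, hv⟩ := Finset.card_pos.1
        (Nat.lt_of_lt_of_le Nat.zero_lt_two (hE' f hfE).2)
      have : v ∈ A := h1 hv
      have : v ∈ B := h2 hv
      rw [hB, Finset.mem_sdiff] at this
      exact this.2 ‹v ∈ A›
    have hc1 := hHFi A hAne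
    have hc2 := hHFi B hBne
    have hc3 : (restrict edge (T i) M).card ≤
        (restrict edge (T i) A).card + (restrict edge (T i) B).card :=
      le_trans (Finset.card_le_card hsplit) (Finset.card_union_le _ _)
    have hc4 : B.card = M.card - A.card := Finset.card_sdiff_of_subset Finset.inter_subset_left
    have hc5 : A.card ≤ M.card := Finset.card_le_card Finset.inter_subset_left
    have hc6 := hMt.2
    omega
  exact ⟨M, hMt, heM, hMU, hmin⟩

end Machine2

section Machine3
variable [DecidableEq V] [DecidableEq α]
variable {edge : α → Finset V} {E' : Finset α} {S : Finset V} {k : ℕ}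
  {F0 T That : Fin k → Finset α} {x : V} {e : α}

lemma transfer (hF0 : Valid edge E' k F0)
    (hmax : ∀ T, Valid edge E' k T → sumT k T ≤ sumT k F0)
    (hE' : ∀ e ∈ E', edge e ⊆ S ∧ 2 ≤ (edge e).card)
    (hreach : Relation.ReflTransGen (StepR edge E' k) F0 T)
    (hstep : StepR edge E' k T That)
    (heU : edge e ⊆ Uset edge E' S k F0 x)
    (hP : ∀ i, ∃ Y, Tight edge (That i) Y ∧ edge e ⊆ Y ∧ Y ⊆ Uset edge E' S k F0 x) :
    ∀ i, ∃ Y, Tight edge (T i) Y ∧ edge e ⊆ Y ∧ Y ⊆ Uset edge E' S k F0 x := by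
  set U := Uset edge E' S k F0 x with hUdef
  obtain ⟨hT, hThat, j, g, g', hgE, hgT, hg'T, hupd⟩ := hstep
  intro i
  by_cases hij : i = j
  · subst hij
    obtain ⟨Y, hYt, heY, hYU⟩ := hP i
    have hupdi : That i = insert g ((T i).erase g') := by rw [hupd, Function.update_self]
    rw [hupdi] at hYt
    have hHFi : HF edge (T i) := hT.2.1 i
    have hHFhat : HF edge (insert g ((T i).erase g')) := by
      have := hThat.2.1 i
      rwa [hupdi] at this
    have hgTi : g ∉ T i := hgT i
    have hgnotin : ∀ Z : Finset V, g ∉ restrict edge (T i) Z :=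
      fun Z => e_not_mem_restrict hgTi Z
    by_cases hgY : edge g ⊆ Y
    · by_cases hg'Y : edge g' ⊆ Y
      · -- both inside: Y is tight for T i as well
        refine ⟨Y, ⟨hYt.1, ?_⟩, heY, hYU⟩
        have hr : restrict edge (insert g ((T i).erase g')) Y
            = insert g (((restrict edge (T i) Y).erase g')) := by
          rw [restrict_insert, restrict_erase, if_pos hgY]
        have hg'res : g' ∈ restrict edge (T i) Y := mem_restrict.2 ⟨hg'T, hg'Y⟩
        have h1 : (insert g (((restrict edge (T i) Y).erase g'))).card
            = ((restrict edge (T i) Y).erase g').card + 1 :=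
          Finset.card_insert_of_notMem (fun h => hgnotin Y (Finset.mem_of_mem_erase h))
        have h2 := Finset.card_erase_of_mem hg'res
        have h3 : 1 ≤ (restrict edge (T i) Y).card := Finset.card_pos.2 ⟨g', hg'res⟩
        have h4 := hYt.2
        rw [hr] at h4
        omega
      · -- repair case
        obtain ⟨M, hMt, hgM, hMU, hMmin⟩ := zero_lemma hF0 hmax hE' hreach hgE hgT
          (hgY.trans hYU) i
        have hg'M : g' ∈ restrict edge (T i) M :=
          exchange_in hHFi hgTi hg'T (hupdi ▸ hThat.2.1 i) hMt hgM
        have hgne : (edge g).Nonempty :=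
          Finset.card_pos.1 (Nat.lt_of_lt_of_le Nat.zero_lt_two (hE' g hgE).2)
        -- M is tight for That i
        have hMthat : Tight edge (insert g ((T i).erase g')) M := by
          refine ⟨hMt.1, ?_⟩
          have hr : restrict edge (insert g ((T i).erase g')) M
              = insert g (((restrict edge (T i) M).erase g')) := by
            rw [restrict_insert, restrict_erase, if_pos hgM]
          have h1 : (insert g (((restrict edge (T i) M).erase g'))).card
              = ((restrict edge (T i) M).erase g').card + 1 :=
            Finset.card_insert_of_notMem (fun h => hgnotin M (Finset.mem_of_mem_erase h))
          have h2 := Finset.card_erase_of_mem hg'M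
          have h3 : 1 ≤ (restrict edge (T i) M).card := Finset.card_pos.2 ⟨g', hg'M⟩
          have h4 := hMt.2
          rw [hr, h1, h2]
          omega
        have hint : (Y ∩ M).Nonempty := by
          obtain ⟨v, hv⟩ := hgne
          exact ⟨v, Finset.mem_inter.2 ⟨hgY hv, hgM hv⟩⟩
        have hun : Tight edge (insert g ((T i).erase g')) (Y ∪ M) :=
          Tight.union hHFhat hYt hMthat hint
        refine ⟨Y ∪ M, ⟨hun.1, ?_⟩, heY.trans Finset.subset_union_left,
          Finset.union_subset hYU hMU⟩
        have hgYM : edge g ⊆ Y ∪ M := hgY.trans Finset.subset_union_left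
        have hg'YM : g' ∈ restrict edge (T i) (Y ∪ M) :=
          (restrict_mono_right (T i) Finset.subset_union_right) hg'M
        have hr : restrict edge (insert g ((T i).erase g')) (Y ∪ M)
            = insert g (((restrict edge (T i) (Y ∪ M)).erase g')) := by
          rw [restrict_insert, restrict_erase, if_pos hgYM]
        have h1 : (insert g (((restrict edge (T i) (Y ∪ M)).erase g'))).card
            = ((restrict edge (T i) (Y ∪ M)).erase g').card + 1 :=
          Finset.card_insert_of_notMem (fun h => hgnotin _ (Finset.mem_of_mem_erase h))
        have h2 := Finset.card_erase_of_mem hg'YM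
        have h3 : 1 ≤ (restrict edge (T i) (Y ∪ M)).card := Finset.card_pos.2 ⟨g', hg'YM⟩
        have h4 := hun.2
        rw [hr, h1, h2] at h4
        omega
    · have hr : restrict edge (insert g ((T i).erase g')) Y
          = (restrict edge (T i) Y).erase g' := by
        rw [restrict_insert, restrict_erase, if_neg hgY]
      by_cases hg'Y : edge g' ⊆ Y
      · -- impossible: T i would have |Y| edges in Y
        exfalso
        have hg'res : g' ∈ restrict edge (T i) Y := mem_restrict.2 ⟨hg'T, hg'Y⟩
        have h2 := Finset.card_erase_of_mem hg'res
        have h3 : 1 ≤ (restrict edge (T i) Y).card := Finset.card_pos.2 ⟨g', hg'res⟩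
        have h4 := hYt.2
        have h5 := hHFi Y hYt.1
        rw [hr] at h4
        omega
      · refine ⟨Y, ⟨hYt.1, ?_⟩, heY, hYU⟩
        have hg'res : g' ∉ restrict edge (T i) Y :=
          fun h => hg'Y (mem_restrict.1 h).2
        have h4 := hYt.2
        rw [hr, Finset.erase_eq_of_notMem hg'res] at h4
        exact h4
  · obtain ⟨Y, hYt, heY, hYU⟩ := hP i
    rw [hupd, Function.update_of_ne hij] at hYt
    exact ⟨Y, hYt, heY, hYU⟩

lemma claimB (hF0 : Valid edge E' k F0)
    (hmax : ∀ T, Valid edge E' k T → sumT k T ≤ sumT k F0)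
    (hE' : ∀ e ∈ E', edge e ⊆ S ∧ 2 ≤ (edge e).card)
    (hmob : Mobile edge E' k F0 e) (heU : edge e ⊆ Uset edge E' S k F0 x) :
    ∀ i, ∃ Y, Tight edge (F0 i) Y ∧ edge e ⊆ Y ∧ Y ⊆ Uset edge E' S k F0 x := by
  obtain ⟨heE, Tw, hreachw, hunused⟩ := hmob
  have main : ∀ T, Relation.ReflTransGen (StepR edge E' k) T Tw →
      Relation.ReflTransGen (StepR edge E' k) F0 T →
      (∀ i, ∃ Y, Tight edge (T i) Y ∧ edge e ⊆ Y ∧ Y ⊆ Uset edge E' S k F0 x) := by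
    intro T h
    induction h using Relation.ReflTransGen.head_induction_on with
    | refl =>
      intro hreach
      intro i
      obtain ⟨M, hM1, hM2, hM3, _⟩ :=
        zero_lemma hF0 hmax hE' hreach heE hunused heU i
      exact ⟨M, hM1, hM2, hM3⟩
    | @head a c hstep hrest ih =>
      intro hreach
      have hreachc : Relation.ReflTransGen (StepR edge E' k) F0 c := hreach.tail hstep
      exact transfer hF0 hmax hE' hreach hstep heU (ih hreachc)
  exact main F0 hreachw Relation.ReflTransGen.refl

lemma first_leave (hE' : ∀ e ∈ E', edge e ⊆ S ∧ 2 ≤ (edge e).card)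
    {W : Finset V} (hxW : x ∈ W) {v : V} (hv : v ∈ Uset edge E' S k F0 x) (hvW : v ∉ W) :
    ∃ f, Mobile edge E' k F0 f ∧ edge f ⊆ Uset edge E' S k F0 x ∧
      (edge f ∩ W).Nonempty ∧ ¬ edge f ⊆ W := by
  have hR := (mem_Uset.1 hv).2
  have main : ∀ u, Relation.ReflTransGen
      (fun a b => ∃ f, Mobile edge E' k F0 f ∧ a ∈ edge f ∧ b ∈ edge f) x u → u ∈ S →
      u ∈ W ∨ ∃ f, Mobile edge E' k F0 f ∧ edge f ⊆ Uset edge E' S k F0 x ∧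
        (edge f ∩ W).Nonempty ∧ ¬ edge f ⊆ W := by
    intro u h
    induction h with
    | refl => exact fun _ => Or.inl hxW
    | @tail b c hxb hbc ih =>
      intro hcS
      obtain ⟨f, hfmob, hbf, hcf⟩ := hbc
      have hbS : b ∈ S := (hE' f hfmob.1).1 hbf
      rcases ih hbS with hbW | hrest
      · -- b ∈ W
        have hbU : b ∈ Uset edge E' S k F0 x := mem_Uset.2 ⟨hbS, hxb⟩
        have hfU : edge f ⊆ Uset edge E' S k F0 x :=
          Uset_closed (fun g hg => (hE' g hg).1) hfmob hbf hbU
        by_cases hcW : c ∈ W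
        · exact Or.inl hcW
        · exact Or.inr ⟨f, hfmob, hfU, ⟨b, Finset.mem_inter.2 ⟨hbf, hbW⟩⟩,
            fun hsub => hcW (hsub hcf)⟩
      · exact Or.inr hrest
  rcases main v hR (mem_Uset.1 hv).1 with h | h
  · exact absurd h hvW
  · exact h

lemma U_tight (hF0 : Valid edge E' k F0)
    (hmax : ∀ T, Valid edge E' k T → sumT k T ≤ sumT k F0)
    (hE' : ∀ e ∈ E', edge e ⊆ S ∧ 2 ≤ (edge e).card)
    {e0 : α} (hmob0 : Mobile edge E' k F0 e0) (hx : x ∈ edge e0) (i : Fin k) :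
    Tight edge (F0 i) (Uset edge E' S k F0 x) := by
  classical
  set U := Uset edge E' S k F0 x with hUdef
  have hxS : x ∈ S := (hE' e0 hmob0.1).1 hx
  have hxU : x ∈ U := mem_Uset.2 ⟨hxS, Relation.ReflTransGen.refl⟩
  have he0U : edge e0 ⊆ U := Uset_closed (fun g hg => (hE' g hg).1) hmob0 hx hxU
  have hUS : U ⊆ S := Finset.filter_subset _ _
  have hE2 : ∀ f ∈ F0 i, 2 ≤ (edge f).card := fun f hf => (hE' f (hF0.1 i hf)).2
  set 𝒲 := (S.powerset.filter fun W => x ∈ W ∧ W ⊆ U ∧ Tight edge (F0 i) W) with h𝒲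
  have hne : 𝒲.Nonempty := by
    refine ⟨{x}, Finset.mem_filter.2 ⟨Finset.mem_powerset.2 ?_, Finset.mem_singleton_self x,
      ?_, tight_singleton hE2 x⟩⟩
    · exact Finset.singleton_subset_iff.2 hxS
    · exact Finset.singleton_subset_iff.2 hxU
  obtain ⟨W, hWmem, hWmax⟩ := Finset.exists_max_image 𝒲 Finset.card hne
  have hWfacts := Finset.mem_filter.1 hWmem
  have hWS : W ⊆ S := Finset.mem_powerset.1 hWfacts.1
  have hxW : x ∈ W := hWfacts.2.1
  have hWU : W ⊆ U := hWfacts.2.2.1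
  have hWt : Tight edge (F0 i) W := hWfacts.2.2.2
  have hWeqU : W = U := by
    apply Finset.Subset.antisymm hWU
    intro v hvU
    by_contra hvW
    obtain ⟨f, hfmob, hfU, hfintW, hfnotW⟩ := first_leave hE' hxW hvU hvW
    obtain ⟨Y, hYt, hfY, hYU⟩ := claimB hF0 hmax hE' hfmob hfU i
    have hint : (W ∩ Y).Nonempty := by
      obtain ⟨a, ha⟩ := hfintW
      exact ⟨a, Finset.mem_inter.2 ⟨(Finset.mem_inter.1 ha).2,
        hfY (Finset.mem_inter.1 ha).1⟩⟩
    have hWY : Tight edge (F0 i) (W ∪ Y) := Tight.union (hF0.2.1 i) hWt hYt hint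
    have hmem2 : W ∪ Y ∈ 𝒲 := by
      refine Finset.mem_filter.2 ⟨Finset.mem_powerset.2
        (Finset.union_subset hWS (hYU.trans hUS)), Finset.mem_union_left _ hxW,
        Finset.union_subset hWU hYU, hWY⟩
    have hlt : W.card < (W ∪ Y).card := by
      apply Finset.card_lt_card
      rw [Finset.ssubset_iff_of_subset Finset.subset_union_left]
      obtain ⟨b, hb⟩ : ∃ b, b ∈ edge f ∧ b ∉ W := by
        by_contra hcon
        push_neg at hcon
        exact hfnotW (fun w hw => hcon w hw)
      exact ⟨b, Finset.mem_union_right _ (hfY hb.1), hb.2⟩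
    have := hWmax (W ∪ Y) hmem2
    omega
  exact hWeqU ▸ hWt

end Machine3

section Contract
variable [DecidableEq V] [DecidableEq α]
variable {edge : α → Finset V} {E' : Finset α} {S U : Finset V} {x : V} {k : ℕ}

lemma restrict_union (A B : Finset α) (X : Finset V) :
    restrict edge (A ∪ B) X = restrict edge A X ∪ restrict edge B X :=
  Finset.filter_union _ _ _

lemma restrict_restrict (F : Finset α) (U X : Finset V) :
    restrict edge (restrict edge F U) X = restrict edge F (U ∩ X) := by
  ext f
  simp only [mem_restrict, Finset.subset_inter_iff]
  tauto

/-- The singleton partition of `S`. -/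
lemma singleton_partition (S : Finset V) :
    IsPartitionOf (S.image fun v => ({v} : Finset V)) S := by
  refine ⟨fun P hP => ?_, fun P hP Q hQ hPQ => ?_, ?_⟩
  · obtain ⟨v, _, rfl⟩ := Finset.mem_image.1 hP
    exact Finset.singleton_nonempty v
  · obtain ⟨v, _, rfl⟩ := Finset.mem_image.1 hP
    obtain ⟨w, _, rfl⟩ := Finset.mem_image.1 hQ
    rw [Finset.disjoint_singleton_left, Finset.mem_singleton]
    exact fun h => hPQ (h ▸ rfl)
  · ext v
    rw [Finset.mem_sup]
    constructor
    · rintro ⟨P, hP, hvP⟩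
      obtain ⟨w, hw, rfl⟩ := Finset.mem_image.1 hP
      rw [id_eq, Finset.mem_singleton] at hvP
      exact hvP ▸ hw
    · intro hv
      exact ⟨{v}, Finset.mem_image_of_mem _ hv, by simp⟩

lemma delta_singleton (hE' : ∀ e ∈ E', edge e ⊆ S ∧ 2 ≤ (edge e).card) :
    delta edge E' (S.image fun v => ({v} : Finset V)) = E' := by
  apply Finset.Subset.antisymm (delta_subset _ _)
  intro e he
  have hsup := (singleton_partition S).2.2
  refine Finset.mem_filter.2 ⟨he, ?_, ?_⟩
  · rw [hsup]; exact (hE' e he).1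
  have hinj : Set.InjOn (fun v => ({v} : Finset V)) (edge e) := by
    intro a _ b _ hab
    simpa using hab
  calc 2 ≤ (edge e).card := (hE' e he).2
    _ = ((edge e).image fun v => ({v} : Finset V)).card :=
        (Finset.card_image_of_injOn hinj).symm
    _ ≤ _ := by
      apply Finset.card_le_card
      intro P hP
      obtain ⟨v, hv, rfl⟩ := Finset.mem_image.1 hP
      refine Finset.mem_filter.2 ⟨Finset.mem_image_of_mem _ ((hE' e he).1 hv), ?_⟩
      exact ⟨v, Finset.mem_inter.2 ⟨hv, Finset.mem_singleton_self v⟩⟩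

/-- Lifting hyperforests through contraction of a tight set `U`. -/
lemma lift_HF (edge : α → Finset V) {edge2 : α → Finset V} (U : Finset V) (x : V) (hxU : x ∈ U)
    (hedge2 : ∀ f, edge2 f = if (edge f ∩ U).Nonempty then insert x (edge f \ U) else edge f)
    {A G : Finset α}
    (hA2 : HF edge2 A) (hAU : ∀ f ∈ A, ¬ edge f ⊆ U)
    (hG : HF edge G) (hGne : ∀ f ∈ G, (edge f).Nonempty) :
    HF edge (A ∪ restrict edge G U) := by
  intro X hXne
  rw [restrict_union, restrict_restrict]
  by_cases hXU : (U ∩ X).Nonempty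
  · set X' := insert x (X \ U) with hX'
    have hxXU : x ∉ X \ U := fun h => (Finset.mem_sdiff.1 h).2 hxU
    have hX'card : X'.card = (X \ U).card + 1 := Finset.card_insert_of_notMem hxXU
    have hsub : restrict edge A X ⊆ restrict edge2 A X' := by
      intro f hf
      rw [mem_restrict] at hf ⊢
      refine ⟨hf.1, ?_⟩
      rw [hedge2 f]
      by_cases hfint : (edge f ∩ U).Nonempty
      · rw [if_pos hfint, hX']
        exact Finset.insert_subset_insert x (Finset.sdiff_subset_sdiff hf.2 le_rfl)
      · rw [if_neg hfint]
        intro v hv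
        rw [hX']
        refine Finset.mem_insert_of_mem (Finset.mem_sdiff.2 ⟨hf.2 hv, fun hvU => ?_⟩)
        exact hfint ⟨v, Finset.mem_inter.2 ⟨hv, hvU⟩⟩
    have h3 := hA2 X' (Finset.insert_nonempty _ _)
    have h4 := hG (U ∩ X) hXU
    have h4' := restrict_restrict (edge := edge) G U X
    have h5 := Finset.card_union_le (restrict edge A X) (restrict edge G (U ∩ X))
    have h6 := Finset.card_le_card hsub
    have h7 : (X \ U).card + (X ∩ U).card = X.card := Finset.card_sdiff_add_card_inter X U
    have h8 : (U ∩ X).card = (X ∩ U).card := by rw [Finset.inter_comm]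
    omega
  · -- X ∩ U empty
    have h1 : restrict edge G (U ∩ X) = ∅ := by
      rw [Finset.eq_empty_iff_forall_notMem]
      intro f hf
      obtain ⟨v, hv⟩ := hGne f (mem_restrict.1 hf).1
      have := (mem_restrict.1 hf).2 hv
      rw [Finset.not_nonempty_iff_eq_empty] at hXU
      exact absurd (hXU ▸ this) (Finset.notMem_empty v)
    have h2 : restrict edge A X ⊆ restrict edge2 A X := by
      intro f hf
      rw [mem_restrict] at hf ⊢
      refine ⟨hf.1, ?_⟩
      rw [hedge2 f]
      have hfU : ¬ (edge f ∩ U).Nonempty := by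
        intro ⟨v, hv⟩
        have hvX : v ∈ X := hf.2 (Finset.mem_inter.1 hv).1
        have hvU : v ∈ U := (Finset.mem_inter.1 hv).2
        exact hXU ⟨v, Finset.mem_inter.2 ⟨hvU, hvX⟩⟩
      rw [if_neg hfU]
      exact hf.2
    have h3 := hA2 X hXne
    have h4 := Finset.card_le_card h2
    rw [h1, Finset.union_empty]
    omega

end Contract

section Contract2
variable [DecidableEq V] [DecidableEq α]
variable {edge : α → Finset V} {E' : Finset α} {S U : Finset V} {x : V} {k : ℕ}

lemma contracted_cond
    (hE' : ∀ e ∈ E', edge e ⊆ S ∧ 2 ≤ (edge e).card)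
    (hcond : ∀ Ps, IsPartitionOf Ps S → k * (Ps.card - 1) ≤ (delta edge E' Ps).card)
    (hUS : U ⊆ S) (hxU : x ∈ U) (hU2 : 2 ≤ U.card)
    {edge2 : α → Finset V}
    (hedge2 : ∀ f, edge2 f = if (edge f ∩ U).Nonempty then insert x (edge f \ U) else edge f)
    {E2 : Finset α} (hE2 : E2 = E'.filter fun f => ¬ edge f ⊆ U)
    (Ps' : Finset (Finset V)) (hPs' : IsPartitionOf Ps' (insert x (S \ U))) :
    k * (Ps'.card - 1) ≤ (delta edge2 E2 Ps').card := by
  classical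
  set S' := insert x (S \ U) with hS'
  have hxS' : x ∈ S' := Finset.mem_insert_self _ _
  have hsub' : ∀ P ∈ Ps', P ⊆ S' := by
    intro P hP
    rw [← hPs'.2.2]
    exact Finset.le_sup (f := id) hP
  obtain ⟨Px, hPxmem, hxPx⟩ := Finset.mem_sup.1 (by rw [hPs'.2.2]; exact hxS' : x ∈ Ps'.sup id)
  set Q := (Px \ {x}) ∪ U with hQ
  set Ps := insert Q (Ps'.erase Px) with hPs
  have hPdisjU : ∀ P ∈ Ps', P ≠ Px → Disjoint P U ∧ x ∉ P := by
    intro P hP hne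
    have hd := hPs'.2.1 P hP Px hPxmem hne
    constructor
    · rw [Finset.disjoint_left]
      intro v hvP hvU
      have hvS' : v ∈ S' := hsub' P hP hvP
      rcases Finset.mem_insert.1 hvS' with rfl | hvS
      · exact absurd hxPx (Finset.disjoint_left.1 hd hvP)
      · exact (Finset.mem_sdiff.1 hvS).2 hvU
    · intro hxP
      exact absurd hxPx (Finset.disjoint_left.1 hd hxP)
  obtain ⟨u, huU, hux⟩ := Finset.exists_mem_ne (s := U) (by omega) x
  have huS' : u ∉ S' := by
    rw [hS', Finset.mem_insert]
    push_neg
    exact ⟨hux, fun h => (Finset.mem_sdiff.1 h).2 huU⟩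
  have hQnotin : Q ∉ Ps'.erase Px := by
    intro hmem
    have : Q ⊆ S' := hsub' Q (Finset.mem_of_mem_erase hmem)
    exact huS' (this (Finset.mem_union_right _ huU))
  have hPs'ne : Ps'.Nonempty := ⟨Px, hPxmem⟩
  have hcardPs : Ps.card = Ps'.card := by
    rw [hPs, Finset.card_insert_of_notMem hQnotin, Finset.card_erase_of_mem hPxmem]
    have := Finset.card_pos.2 hPs'ne
    omega
  have hmem2 : ∀ (f : α) (w : V), w ∈ edge f → w ∉ U → w ∈ edge2 f := by
    intro f w hw hwU
    rw [hedge2 f]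
    split_ifs with hint
    · exact Finset.mem_insert_of_mem (Finset.mem_sdiff.2 ⟨hw, hwU⟩)
    · exact hw
  have hPart : IsPartitionOf Ps S := by
    refine ⟨?_, ?_, ?_⟩
    · intro P hP
      rcases Finset.mem_insert.1 hP with rfl | hP
      · exact ⟨x, Finset.mem_union_right _ hxU⟩
      · exact hPs'.1 P (Finset.mem_of_mem_erase hP)
    · intro P hP P2 hP2 hne
      have key : ∀ R ∈ Ps'.erase Px, Disjoint Q R := by
        intro R hR
        have hRPs' : R ∈ Ps' := Finset.mem_of_mem_erase hR
        have hRne : R ≠ Px := (Finset.mem_erase.1 hR).1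
        rw [hQ, Finset.disjoint_union_left]
        constructor
        · exact Finset.disjoint_of_subset_left (Finset.sdiff_subset)
            (hPs'.2.1 Px hPxmem R hRPs' (fun h => hRne h.symm))
        · exact (hPdisjU R hRPs' hRne).1.symm
      rcases Finset.mem_insert.1 hP with rfl | hP <;>
        rcases Finset.mem_insert.1 hP2 with rfl | hP2
      · exact absurd rfl hne
      · exact key P2 hP2
      · exact (key P hP).symm
      · exact hPs'.2.1 P (Finset.mem_of_mem_erase hP) P2 (Finset.mem_of_mem_erase hP2) hne
    · ext v
      rw [Finset.mem_sup]
      constructor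
      · rintro ⟨P, hP, hvP⟩
        rw [id_eq] at hvP
        rcases Finset.mem_insert.1 hP with rfl | hP
        · rcases Finset.mem_union.1 hvP with h | h
          · have : v ∈ S' := hsub' Px hPxmem (Finset.mem_sdiff.1 h).1
            rcases Finset.mem_insert.1 this with rfl | hvS
            · exact hUS hxU
            · exact (Finset.mem_sdiff.1 hvS).1
          · exact hUS h
        · have : v ∈ S' := hsub' P (Finset.mem_of_mem_erase hP) hvP
          rcases Finset.mem_insert.1 this with rfl | hvS
          · exact hUS hxU
          · exact (Finset.mem_sdiff.1 hvS).1
      · intro hvS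
        by_cases hvU : v ∈ U
        · exact ⟨Q, Finset.mem_insert_self _ _, Finset.mem_union_right _ hvU⟩
        · have hvS' : v ∈ S' := Finset.mem_insert_of_mem (Finset.mem_sdiff.2 ⟨hvS, hvU⟩)
          obtain ⟨P', hP', hvP'⟩ := Finset.mem_sup.1 (by rw [hPs'.2.2]; exact hvS' :
            v ∈ Ps'.sup id)
          rw [id_eq] at hvP'
          by_cases hPQ : P' = Px
          · subst hPQ
            refine ⟨Q, Finset.mem_insert_self _ _, Finset.mem_union_left _ ?_⟩
            refine Finset.mem_sdiff.2 ⟨hvP', ?_⟩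
            rw [Finset.mem_singleton]
            rintro rfl
            exact hvU hxU
          · exact ⟨P', Finset.mem_insert_of_mem (Finset.mem_erase.2 ⟨hPQ, hP'⟩), hvP'⟩
  have hdeltasub : delta edge E' Ps ⊆ delta edge2 E2 Ps' := by
    intro f hf
    obtain ⟨hfE', hfsup, hfcnt⟩ := Finset.mem_filter.1 hf
    have hfS : edge f ⊆ S := (hE' f hfE').1
    -- f is not inside U
    have hfU : ¬ edge f ⊆ U := by
      intro hfsubU
      have : (Ps.filter fun P => (edge f ∩ P).Nonempty) ⊆ {Q} := by
        intro P hP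
        obtain ⟨hPmem, w, hw⟩ := Finset.mem_filter.1 hP
        rw [Finset.mem_singleton]
        by_contra hne
        have hPerase : P ∈ Ps'.erase Px := by
          rcases Finset.mem_insert.1 hPmem with rfl | h
          · exact absurd rfl hne
          · exact h
        have hdisj := (hPdisjU P (Finset.mem_of_mem_erase hPerase)
          (Finset.mem_erase.1 hPerase).1).1
        have hwP := (Finset.mem_inter.1 hw).2
        have hwU := hfsubU (Finset.mem_inter.1 hw).1
        exact absurd hwU (Finset.disjoint_left.1 hdisj hwP)
      have := Finset.card_le_card this
      rw [Finset.card_singleton] at this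
      omega
    refine Finset.mem_filter.2 ⟨?_, ?_, ?_⟩
    · rw [hE2]; exact Finset.mem_filter.2 ⟨hfE', hfU⟩
    · rw [hPs'.2.2, hedge2 f]
      split_ifs with hint
      · exact Finset.insert_subset hxS'
          ((Finset.sdiff_subset_sdiff hfS le_rfl).trans (Finset.subset_insert _ _))
      · intro w hw
        refine Finset.mem_insert_of_mem (Finset.mem_sdiff.2 ⟨hfS hw, fun hwU => ?_⟩)
        exact hint ⟨w, Finset.mem_inter.2 ⟨hw, hwU⟩⟩
    · -- counting parts via the map φ
      set φ : Finset V → Finset V := fun P => if P = Q then Px else P with hφ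
      have hmaps : ∀ P ∈ Ps.filter (fun P => (edge f ∩ P).Nonempty),
          φ P ∈ Ps'.filter (fun P => (edge2 f ∩ P).Nonempty) := by
        intro P hP
        obtain ⟨hPmem, w, hw⟩ := Finset.mem_filter.1 hP
        obtain ⟨hwf, hwP⟩ := Finset.mem_inter.1 hw
        by_cases hPQ : P = Q
        · rw [hφ]
          simp only [if_pos hPQ]
          refine Finset.mem_filter.2 ⟨hPxmem, ?_⟩
          subst hPQ
          rcases Finset.mem_union.1 hwP with h | h
          · -- w ∈ Px \ {x}
            have hwx : w ≠ x := by
              intro h'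
              exact (Finset.mem_sdiff.1 h).2 (h' ▸ Finset.mem_singleton_self x)
            have hwU : w ∉ U := by
              have hwS' : w ∈ S' := hsub' Px hPxmem (Finset.mem_sdiff.1 h).1
              rcases Finset.mem_insert.1 hwS' with h' | h'
              · exact absurd h' hwx
              · exact (Finset.mem_sdiff.1 h').2
            exact ⟨w, Finset.mem_inter.2 ⟨hmem2 f w hwf hwU, (Finset.mem_sdiff.1 h).1⟩⟩
          · -- w ∈ U: then x is in edge2 f and in Px
            have hint : (edge f ∩ U).Nonempty := ⟨w, Finset.mem_inter.2 ⟨hwf, h⟩⟩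
            refine ⟨x, Finset.mem_inter.2 ⟨?_, hxPx⟩⟩
            rw [hedge2 f, if_pos hint]
            exact Finset.mem_insert_self _ _
        · have hPerase : P ∈ Ps'.erase Px := by
            rcases Finset.mem_insert.1 hPmem with h | h
            · exact absurd h hPQ
            · exact h
          rw [hφ]
          simp only [if_neg hPQ]
          refine Finset.mem_filter.2 ⟨Finset.mem_of_mem_erase hPerase, ?_⟩
          have hwU : w ∉ U := fun hwU => absurd hwU
            (Finset.disjoint_left.1 (hPdisjU P (Finset.mem_of_mem_erase hPerase)
              (Finset.mem_erase.1 hPerase).1).1 hwP)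
          exact ⟨w, Finset.mem_inter.2 ⟨hmem2 f w hwf hwU, hwP⟩⟩
      have hinj : Set.InjOn φ (Ps.filter (fun P => (edge f ∩ P).Nonempty)) := by
        intro P1 h1 P2 h2 heq
        have h1m := (Finset.mem_filter.1 (by exact_mod_cast h1)).1
        have h2m := (Finset.mem_filter.1 (by exact_mod_cast h2)).1
        rw [hφ] at heq
        simp only at heq
        by_cases hq1 : P1 = Q <;> by_cases hq2 : P2 = Q
        · rw [hq1, hq2]
        · rw [if_pos hq1, if_neg hq2] at heq
          have : P2 ∈ Ps'.erase Px := by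
            rcases Finset.mem_insert.1 h2m with h | h
            · exact absurd h hq2
            · exact h
          exact absurd heq.symm (Finset.mem_erase.1 this).1
        · rw [if_neg hq1, if_pos hq2] at heq
          have : P1 ∈ Ps'.erase Px := by
            rcases Finset.mem_insert.1 h1m with h | h
            · exact absurd h hq1
            · exact h
          exact absurd heq (Finset.mem_erase.1 this).1
        · rwa [if_neg hq1, if_neg hq2] at heq
      calc 2 ≤ (Ps.filter fun P => (edge f ∩ P).Nonempty).card := hfcnt
        _ ≤ (Ps'.filter fun P => (edge2 f ∩ P).Nonempty).card :=
          Finset.card_le_card_of_injOn φ hmaps hinj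
  calc k * (Ps'.card - 1) = k * (Ps.card - 1) := by rw [hcardPs]
    _ ≤ (delta edge E' Ps).card := hcond Ps hPart
    _ ≤ (delta edge2 E2 Ps').card := Finset.card_le_card hdeltasub

end Contract2

section MainInduction
variable [DecidableEq V] [DecidableEq α]

theorem aux_main (k : ℕ) :
    ∀ (n : ℕ) (S : Finset V) (edge : α → Finset V) (E' : Finset α),
      S.card = n → S.Nonempty →
      (∀ e ∈ E', edge e ⊆ S ∧ 2 ≤ (edge e).card) →
      (∀ Ps : Finset (Finset V), IsPartitionOf Ps S →
        k * (Ps.card - 1) ≤ (delta edge E' Ps).card) →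
      ∃ T : Fin k → Finset α, Valid edge E' k T ∧ ∀ i, (T i).card + 1 = S.card := by
  intro n
  induction n using Nat.strong_induction_on with
  | _ n IH =>
  intro S edge E' hcard hSne hE' hcond
  classical
  obtain ⟨F0, hF0, hmax⟩ := exists_max_tuple edge E' k
  by_cases hdone : ∀ i, (F0 i).card + 1 = S.card
  · exact ⟨F0, hF0, hdone⟩
  -- every forest has < |S| - 1 edges somewhere
  push_neg at hdone
  obtain ⟨i0, hi0⟩ := hdone
  have hScard1 : 1 ≤ S.card := Finset.card_pos.2 hSne
  have hle : ∀ i, (F0 i).card < S.card := by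
    intro i
    have hres : restrict edge (F0 i) S = F0 i :=
      Finset.filter_true_of_mem (fun f hf => (hE' f (hF0.1 i hf)).1)
    have := hF0.2.1 i S hSne
    rwa [hres] at this
  have hsumlt : sumT k F0 < k * (S.card - 1) := by
    have hi0' : (F0 i0).card < S.card - 1 := by
      have := hle i0
      omega
    calc sumT k F0 = ∑ i : Fin k, (F0 i).card := rfl
      _ < ∑ _i : Fin k, (S.card - 1) := by
        apply Finset.sum_lt_sum
        · intro i _
          have := hle i
          omega
        · exact ⟨i0, Finset.mem_univ i0, hi0'⟩
      _ = k * (S.card - 1) := by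
        rw [Finset.sum_const, Finset.card_univ, Fintype.card_fin, smul_eq_mul]
  -- |E'| is large
  have hE'card : k * (S.card - 1) ≤ E'.card := by
    have h1 := hcond (S.image fun v => ({v} : Finset V)) (singleton_partition S)
    rw [delta_singleton hE'] at h1
    have h2 : (S.image fun v => ({v} : Finset V)).card = S.card := by
      apply Finset.card_image_of_injOn
      intro a _ b _ hab
      simpa using hab
    rw [h2] at h1
    exact h1
  -- unused edge
  set B := Finset.univ.biUnion (fun i => F0 i) with hB
  have hBcard : B.card = sumT k F0 :=
    Finset.card_biUnion (fun a _ b _ hab => hF0.2.2 a b hab)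
  have hBsub : B ⊆ E' := by
    intro f hf
    obtain ⟨i, _, hfi⟩ := Finset.mem_biUnion.1 hf
    exact hF0.1 i hfi
  have hex : (E' \ B).Nonempty := by
    rw [← Finset.card_pos, Finset.card_sdiff_of_subset hBsub]
    omega
  obtain ⟨e0, he0⟩ := hex
  have he0E : e0 ∈ E' := (Finset.mem_sdiff.1 he0).1
  have he0un : ∀ j, e0 ∉ F0 j := by
    intro j hj
    exact (Finset.mem_sdiff.1 he0).2 (Finset.mem_biUnion.2 ⟨j, Finset.mem_univ j, hj⟩)
  have hmob0 : Mobile edge E' k F0 e0 := ⟨he0E, F0, Relation.ReflTransGen.refl, he0un⟩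
  obtain ⟨x, hx⟩ := Finset.card_pos.1
    (Nat.lt_of_lt_of_le Nat.zero_lt_two (hE' e0 he0E).2)
  set U := Uset edge E' S k F0 x with hUdef
  have hUt : ∀ i, Tight edge (F0 i) U := fun i => U_tight hF0 hmax hE' hmob0 hx i
  have hxU : x ∈ U := mem_Uset.2 ⟨(hE' e0 he0E).1 hx, Relation.ReflTransGen.refl⟩
  have he0U : edge e0 ⊆ U := Uset_closed (fun g hg => (hE' g hg).1) hmob0 hx hxU
  have hU2 : 2 ≤ U.card := le_trans (hE' e0 he0E).2 (Finset.card_le_card he0U)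
  have hUS : U ⊆ S := fun v hv => (mem_Uset.1 hv).1
  have hUcardS : U.card ≤ S.card := Finset.card_le_card hUS
  -- contracted hypergraph
  set S2 := insert x (S \ U) with hS2
  set edge2 : α → Finset V :=
    (fun f => if (edge f ∩ U).Nonempty then insert x (edge f \ U) else edge f) with hedge2def
  have hedge2 : ∀ f, edge2 f =
      if (edge f ∩ U).Nonempty then insert x (edge f \ U) else edge f := fun f => rfl
  set E2 := E'.filter (fun f => ¬ edge f ⊆ U) with hE2def
  have hxSU : x ∉ S \ U := fun h => (Finset.mem_sdiff.1 h).2 hxU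
  have hS2card : S2.card = S.card - U.card + 1 := by
    rw [hS2, Finset.card_insert_of_notMem hxSU, Finset.card_sdiff_of_subset hUS]
  have hS2lt : S2.card < n := by omega
  have hS2ne : S2.Nonempty := ⟨x, Finset.mem_insert_self _ _⟩
  have hE2' : ∀ f ∈ E2, edge2 f ⊆ S2 ∧ 2 ≤ (edge2 f).card := by
    intro f hf
    obtain ⟨hfE', hfU⟩ := Finset.mem_filter.1 hf
    have hfS := (hE' f hfE').1
    rw [hedge2 f]
    split_ifs with hint
    · constructor
      · exact Finset.insert_subset (Finset.mem_insert_self _ _)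
          ((Finset.sdiff_subset_sdiff hfS le_rfl).trans (Finset.subset_insert _ _))
      · obtain ⟨w, hw, hwU⟩ : ∃ w ∈ edge f, w ∉ U := by
          by_contra hcon
          push_neg at hcon
          exact hfU hcon
        have hwmem : w ∈ edge f \ U := Finset.mem_sdiff.2 ⟨hw, hwU⟩
        have hxnot : x ∉ edge f \ U := fun h => (Finset.mem_sdiff.1 h).2 hxU
        rw [Finset.card_insert_of_notMem hxnot]
        have : 1 ≤ (edge f \ U).card := Finset.card_pos.2 ⟨w, hwmem⟩
        omega
    · constructor
      · intro w hw
        refine Finset.mem_insert_of_mem (Finset.mem_sdiff.2 ⟨hfS hw, fun hwU => ?_⟩)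
        exact hint ⟨w, Finset.mem_inter.2 ⟨hw, hwU⟩⟩
      · exact (hE' f hfE').2
  have hcond2 : ∀ Ps', IsPartitionOf Ps' S2 →
      k * (Ps'.card - 1) ≤ (delta edge2 E2 Ps').card := by
    intro Ps' hPs'
    exact contracted_cond hE' hcond hUS hxU hU2 hedge2 hE2def Ps' hPs'
  obtain ⟨T2, hT2val, hT2card⟩ := IH S2.card hS2lt S2 edge2 E2 rfl hS2ne hE2' hcond2
  -- lift
  set T := (fun i => T2 i ∪ restrict edge (F0 i) U) with hT
  have hT2E2 : ∀ i, ∀ f ∈ T2 i, f ∈ E' ∧ ¬ edge f ⊆ U := by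
    intro i f hf
    exact ⟨(Finset.mem_filter.1 (hT2val.1 i hf)).1, (Finset.mem_filter.1 (hT2val.1 i hf)).2⟩
  have hdisjTU : ∀ i j, Disjoint (T2 i) (restrict edge (F0 j) U) := by
    intro i j
    rw [Finset.disjoint_left]
    intro f hf1 hf2
    exact (hT2E2 i f hf1).2 (mem_restrict.1 hf2).2
  refine ⟨T, ⟨fun i => ?_, fun i => ?_, fun i j hij => ?_⟩, fun i => ?_⟩
  · rw [hT]
    apply Finset.union_subset
    · exact (hT2val.1 i).trans (Finset.filter_subset _ _)
    · exact (restrict_subset _ _).trans (hF0.1 i)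
  · rw [hT]
    exact lift_HF edge U x hxU hedge2 (hT2val.2.1 i)
      (fun f hf => (hT2E2 i f hf).2) (hF0.2.1 i)
      (fun f hf => Finset.card_pos.1
        (Nat.lt_of_lt_of_le Nat.zero_lt_two (hE' f (hF0.1 i hf)).2))
  · rw [hT]
    rw [Finset.disjoint_union_left]
    constructor
    · rw [Finset.disjoint_union_right]
      exact ⟨hT2val.2.2 i j hij, hdisjTU i j⟩
    · rw [Finset.disjoint_union_right]
      refine ⟨(hdisjTU j i).symm, ?_⟩
      exact Finset.disjoint_of_subset_left (restrict_subset _ _)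
        (Finset.disjoint_of_subset_right (restrict_subset _ _) (hF0.2.2 i j hij))
  · have hdisj := hdisjTU i i
    have hcardU : (restrict edge (F0 i) U).card + 1 = U.card := (hUt i).2
    have hcardT2 : (T2 i).card + 1 = S2.card := hT2card i
    rw [hT]
    rw [Finset.card_union_of_disjoint hdisj]
    omega

end MainInduction

/-- `H` contains `k` pairwise disjoint hypertrees iff
`|δ(Ps)| ≥ k (|Ps| - 1)` for every partition `Ps` of `V` into nonempty parts. -/
theorem disjoint_hypertrees_iff [Fintype V] [DecidableEq V] [DecidableEq α]
    (edge : α → Finset V) (E : Finset α)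
    (hV : 1 ≤ Fintype.card V) (hE : ∀ e ∈ E, 2 ≤ (edge e).card)
    (k : ℕ) (hk : 0 < k) :
    (∃ T : Fin k → Finset α, (∀ i, IsHypertree edge E (T i)) ∧
        ∀ i j, i ≠ j → Disjoint (T i) (T j)) ↔
      ∀ Ps : Finset (Finset V), IsPartition Ps →
        k * (Ps.card - 1) ≤ (delta edge E Ps).card := by
  classical
  have huniv : (Finset.univ : Finset V).card = Fintype.card V := Finset.card_univ
  constructor
  · rintro ⟨T, hT, hdisj⟩ Ps hPs
    have hPart : IsPartitionOf Ps Finset.univ := hPs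
    -- each hypertree crosses the partition at least |Ps| - 1 times
    have hper : ∀ i, Ps.card ≤ (delta edge (T i) Ps).card + 1 := by
      intro i
      have hHF : HF edge (T i) := by
        intro X hX
        have := (hT i).1.2 X hX
        have hX1 : 1 ≤ X.card := Finset.card_pos.2 hX
        omega
      have hne : ∀ e ∈ T i, (edge e).Nonempty := fun e he =>
        Finset.card_pos.1 (Nat.lt_of_lt_of_le Nat.zero_lt_two (hE e ((hT i).1.1 he)))
      have hsub : ∀ e ∈ T i, edge e ⊆ Finset.univ := fun e _ => Finset.subset_univ _
      have hcount := forest_count hPart hHF hne hsub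
      have hTc : (T i).card = Fintype.card V - 1 := (hT i).2
      omega
    have hdelta_disj : ∀ i j, i ≠ j →
        Disjoint (delta edge (T i) Ps) (delta edge (T j) Ps) := fun i j hij =>
      Finset.disjoint_of_subset_left (delta_subset _ _)
        (Finset.disjoint_of_subset_right (delta_subset _ _) (hdisj i j hij))
    have hbU : (Finset.univ.biUnion fun i => delta edge (T i) Ps).card
        = ∑ i, (delta edge (T i) Ps).card :=
      Finset.card_biUnion (fun a _ b _ hab => hdelta_disj a b hab)
    have hbsub : (Finset.univ.biUnion fun i => delta edge (T i) Ps) ⊆ delta edge E Ps := by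
      intro f hf
      obtain ⟨i, _, hfi⟩ := Finset.mem_biUnion.1 hf
      exact delta_mono Ps ((hT i).1.1) hfi
    calc k * (Ps.card - 1) = ∑ _i : Fin k, (Ps.card - 1) := by
          rw [Finset.sum_const, Finset.card_univ, Fintype.card_fin, smul_eq_mul]
      _ ≤ ∑ i, (delta edge (T i) Ps).card := by
          apply Finset.sum_le_sum
          intro i _
          have := hper i
          omega
      _ = (Finset.univ.biUnion fun i => delta edge (T i) Ps).card := hbU.symm
      _ ≤ (delta edge E Ps).card := Finset.card_le_card hbsub
  · intro hcond
    have hSne : (Finset.univ : Finset V).Nonempty := by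
      rw [← Finset.card_pos, huniv]
      omega
    have hE' : ∀ e ∈ E, edge e ⊆ Finset.univ ∧ 2 ≤ (edge e).card :=
      fun e he => ⟨Finset.subset_univ _, hE e he⟩
    have hcond' : ∀ Ps : Finset (Finset V), IsPartitionOf Ps Finset.univ →
        k * (Ps.card - 1) ≤ (delta edge E Ps).card := fun Ps hPs => hcond Ps hPs
    obtain ⟨T, hval, hcards⟩ :=
      aux_main k (Finset.univ : Finset V).card Finset.univ edge E rfl hSne hE' hcond'
    refine ⟨T, fun i => ⟨⟨hval.1 i, fun X hX => ?_⟩, ?_⟩, hval.2.2⟩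
    · have := hval.2.1 i X hX
      have hX1 : 1 ≤ X.card := Finset.card_pos.2 hX
      omega
    · have := hcards i
      rw [huniv] at this
      omega
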